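/- arXiv:2505.23138 — 2 statements merged into one kernel-verified Lean document; each statement's English description precedes it below -/
import Mathlib

section
/- Theorem (state equivalence under perfect training): Let E : (Fin h_p → U) × (Fin h_p → Y) → Z be a state estimator and P : Z × (Fin h_f → U) → (Fin h_f → W) an output predictor satisfying the perfect-training condition: for all x ∈ X, u^p ∈ U^{h_p}, u^f ∈ U^{h_f}, P(E(u^p, h_y^{h_p}(x, u^p)), u^f) = h_w^{h_f}(f^{h_p}(x, u^p), u^f). If the system (f, h_w) is uniformly h_f-observable, then there exists a map G : Z → X such that G(E(u^p, h_y^{h_p}(x, u^p))) = f^{h_p}(x, u^p) for all x and u^p; i.e., the true current state is recoverable from the estimator's output. -/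
/-- Iterated state-transition map: `iterF f j x u` applies `f` `j` times driven by inputs `u`. -/
def iterF {X U : Type*} (f : X → U → X) : (j : ℕ) → X → (Fin j → U) → X
  | 0, x, _ => x
  | j + 1, x, u => f (iterF f j x (fun i => u i.castSucc)) (u (Fin.last j))

/-- Stacked observation map: `stackedObs f h k x u i = h (fⁱ(x, first i inputs of u))`. -/
def stackedObs {X U Y : Type*} (f : X → U → X) (h : X → Y) (k : ℕ)
    (x : X) (u : Fin k → U) : Fin k → Y :=
  fun i => h (iterF f i.val x (fun j : Fin i.val => u ⟨j.1, j.2.trans i.2⟩))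

/-- Uniform `k`-observability: `(x, u) ↦ (hᵏ(x,u), u)` is injective. -/
def UniformObs {X U Y : Type*} (f : X → U → X) (h : X → Y) (k : ℕ) : Prop :=
  Function.Injective (fun p : X × (Fin k → U) => (stackedObs f h k p.1 p.2, p.2))

/-! Fix any future input sequence `uf`. Observability makes `x ↦ h_w^{h_f}(x, uf)` injective, and
perfect training says that the predictor, fed the estimate and `uf`, returns exactly this map at the
true state; so a left inverse of it composed with the predictor recovers the state. -/

theorem UniformObs.injective_stackedObs {X U Y : Type*} {f : X → U → X} {h : X → Y} {k : ℕ}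
    (hobs : UniformObs f h k) (u : Fin k → U) :
    Function.Injective fun x => stackedObs f h k x u :=
  fun _ _ hx => congrArg Prod.fst (@hobs (_, u) (_, u) (Prod.ext hx rfl))

theorem Function.Injective.exists_comp_eq_of_comp_eq {S X Z B : Type*} [Nonempty X]
    {obs : X → B} (hobs : Function.Injective obs) {e : S → Z} {s : S → X} (p : Z → B)
    (hcomm : ∀ a, p (e a) = obs (s a)) : ∃ G : Z → X, ∀ a, G (e a) = s a :=
  ⟨Function.invFun obs ∘ p, fun a => by
    rw [Function.comp_apply, hcomm, Function.leftInverse_invFun hobs]⟩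

theorem state_equivalence_perfect_training {X U Y W Z : Type*}
    [Nonempty X] [Nonempty U]
    (f : X → U → X) (hy : X → Y) (hw : X → W) (hp hf : ℕ)
    (E : (Fin hp → U) × (Fin hp → Y) → Z)
    (P : Z × (Fin hf → U) → (Fin hf → W))
    (hperfect : ∀ (x : X) (up : Fin hp → U) (uf : Fin hf → U),
      P (E (up, stackedObs f hy hp x up), uf) =
        stackedObs f hw hf (iterF f hp x up) uf)
    (hobsw : UniformObs f hw hf) :
    ∃ G : Z → X, ∀ (x : X) (up : Fin hp → U),
      G (E (up, stackedObs f hy hp x up)) = iterF f hp x up := by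
  obtain ⟨u0⟩ := ‹Nonempty U›
  let uf : Fin hf → U := fun _ => u0
  obtain ⟨G, hG⟩ := (hobsw.injective_stackedObs uf).exists_comp_eq_of_comp_eq
    (e := fun q : X × (Fin hp → U) => E (q.2, stackedObs f hy hp q.1 q.2))
    (s := fun q => iterF f hp q.1 q.2) (fun z => P (z, uf)) fun q => hperfect q.1 q.2 uf
  exact ⟨G, fun x up => hG (x, up)⟩
end

section
/- Suppose E and P satisfy perfect training with respect to (f, h_y, h_w) as in the PVSID framework, and (f, h_w) is uniformly h_f-observable. Then the estimator E separates states: for any x₁, x₂ ∈ X and past inputs u₁, u₂ ∈ U^{h_p}, if E(u₁, h_y^{h_p}(x₁, u₁)) = E(u₂, h_y^{h_p}(x₂, u₂)), then f^{h_p}(x₁, u₁) = f^{h_p}(x₂, u₂). -/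
theorem estimator_separates_states {X U Y W Z : Type*} [Nonempty U]
    (f : X → U → X) (hy : X → Y) (hw : X → W) (hp hf : ℕ)
    (E : (Fin hp → U) × (Fin hp → Y) → Z)
    (P : Z × (Fin hf → U) → (Fin hf → W))
    (hperfect : ∀ (x : X) (up : Fin hp → U) (uf : Fin hf → U),
      P (E (up, stackedObs f hy hp x up), uf) =
        stackedObs f hw hf (iterF f hp x up) uf)
    (hobsw : UniformObs f hw hf)
    (x₁ x₂ : X) (u₁ u₂ : Fin hp → U)
    (hE : E (u₁, stackedObs f hy hp x₁ u₁) = E (u₂, stackedObs f hy hp x₂ u₂)) :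
    iterF f hp x₁ u₁ = iterF f hp x₂ u₂ := by
  let uf : Fin hf → U := fun _ => Classical.arbitrary U
  apply hobsw.injective_stackedObs uf
  calc stackedObs f hw hf (iterF f hp x₁ u₁) uf
      = P (E (u₁, stackedObs f hy hp x₁ u₁), uf) := (hperfect x₁ u₁ uf).symm
    _ = P (E (u₂, stackedObs f hy hp x₂ u₂), uf) := by rw [hE]
    _ = stackedObs f hw hf (iterF f hp x₂ u₂) uf := hperfect x₂ u₂ uf
end
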